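/- arXiv:math/0201163 — 3 statements merged into one kernel-verified Lean document; each statement's English description precedes it below -/
import Mathlib

section
/- Let Π be a finitely generated abelian group, let E be an abelian group, and let p : E → Π be a surjective group homomorphism whose kernel has exactly two elements. If the extension does not split, i.e. there is no group homomorphism s : Π → E with p ∘ s = id, then there exists an element a ∈ Π with a ≠ 0 and a + a = 0 such that every e ∈ E with p(e) = a satisfies e + e ≠ 0 (equivalently, every preimage of a in E has order 4). -/
/-!
If the extension does not split, some order-two element `a` of `P` has no lift of order two,
since otherwise every torsion element of `P` would have a lift of the same order: for `n = 2m`,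
correct `m • e` by an order-two lift of `m • p e`, using that the kernel is killed by `2`; for
odd `n`, replace a lift `e` by `(n + 1) • e`. By the structure theorem `P` is a sum of copies of
`ℤ` and of cyclic groups `ZMod (q ^ k)`, and order-preserving lifts of their generators assemble
into a section of `p`.
-/

namespace AddMonoidHom

variable {E P : Type*} [AddCommGroup E] [AddCommGroup P]

def LiftsAlong (A : Type*) [AddCommGroup A] (p : E →+ P) : Prop :=
  ∀ f : A →+ P, ∃ g : A →+ E, p.comp g = f

def HasTorsionLifts (p : E →+ P) : Prop :=
  ∀ (n : ℕ) (a : P), n • a = 0 → ∃ e, p e = a ∧ n • e = 0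

theorem liftsAlong_zmod {p : E →+ P} (hp : p.HasTorsionLifts) (n : ℕ) :
    LiftsAlong (ZMod n) p := by
  intro f
  obtain ⟨e, hpe, hne⟩ :=
    hp n (f 1) (by rw [← map_nsmul, nsmul_one, ZMod.natCast_self, map_zero])
  refine ⟨ZMod.lift n ⟨zmultiplesHom E e, by simpa using hne⟩, ?_⟩
  refine (cancel_right (f := Int.castAddHom (ZMod n)) ZMod.intCast_surjective).1 (ext_int ?_)
  simp only [comp_apply, Int.coe_castAddHom, ZMod.lift_coe, zmultiplesHom_apply, one_zsmul]
  rw [hpe, Int.cast_one]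

-- `ZMod 0` is `ℤ`.
theorem liftsAlong_int {p : E →+ P} (hp : p.HasTorsionLifts) : LiftsAlong ℤ p :=
  liftsAlong_zmod hp 0

theorem LiftsAlong.finsupp {p : E →+ P} {A : Type*} [AddCommGroup A] (h : LiftsAlong A p)
    (α : Type*) : LiftsAlong (α →₀ A) p := by
  intro f
  choose g hg using fun a => h (f.comp (Finsupp.singleAddHom a))
  refine ⟨Finsupp.liftAddHom g, ?_⟩
  rw [Finsupp.comp_liftAddHom]
  ext a : 1
  simp [hg]

theorem LiftsAlong.directSum {p : E →+ P} {ι : Type*} [DecidableEq ι] {A : ι → Type*}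
    [∀ i, AddCommGroup (A i)] (h : ∀ i, LiftsAlong (A i) p) :
    LiftsAlong (DirectSum ι A) p := by
  intro f
  choose g hg using fun i => h i (f.comp (DirectSum.of A i))
  refine ⟨DirectSum.toAddMonoid g, ?_⟩
  ext i x
  simp [← hg]

theorem LiftsAlong.prod {p : E →+ P} {A B : Type*} [AddCommGroup A] [AddCommGroup B]
    (hA : LiftsAlong A p) (hB : LiftsAlong B p) : LiftsAlong (A × B) p := by
  intro f
  obtain ⟨g, hg⟩ := hA (f.comp (inl A B))
  obtain ⟨g', hg'⟩ := hB (f.comp (inr A B))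
  refine ⟨g.coprod g', ?_⟩
  rw [comp_coprod, hg, hg', ← comp_coprod, coprod_inl_inr, comp_id]

theorem LiftsAlong.of_addEquiv {p : E →+ P} {A B : Type*} [AddCommGroup A] [AddCommGroup B]
    (h : LiftsAlong A p) (φ : B ≃+ A) : LiftsAlong B p := by
  intro f
  obtain ⟨g, hg⟩ := h (f.comp φ.symm.toAddMonoidHom)
  refine ⟨g.comp φ.toAddMonoidHom, ?_⟩
  rw [← comp_assoc, hg]
  ext; simp

theorem hasTorsionLifts_of_two_torsion {p : E →+ P} (hp : Function.Surjective p)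
    (hker : ∀ x, p x = 0 → x + x = 0)
    (hlift : ∀ a, a + a = 0 → ∃ e, p e = a ∧ e + e = 0) :
    p.HasTorsionLifts := by
  intro n a hna
  obtain ⟨e, rfl⟩ := hp a
  have hne : p (n • e) = 0 := by rwa [map_nsmul]
  rcases Nat.even_or_odd' n with ⟨m, rfl | rfl⟩
  · -- `m • p e` has order two; correct `m • e` by a lift `f` of it of order two
    obtain ⟨f, hf, hff⟩ := hlift (m • p e) (by rw [← add_nsmul, ← two_mul, hna])
    refine ⟨e, rfl, ?_⟩
    have hdiff := hker (m • e - f) (by rw [map_sub, map_nsmul, hf, sub_self])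
    calc (2 * m) • e = (m • e - f + (m • e - f)) + (f + f) := by rw [mul_nsmul']; abel
      _ = 0 := by rw [hdiff, hff, add_zero]
  · -- for odd `n`, `(n + 1) • e` is another lift, and it is killed by `n`
    refine ⟨(2 * m + 1 + 1) • e, by rw [map_nsmul, add_nsmul, hna, one_nsmul, zero_add], ?_⟩
    rw [smul_comm, show 2 * m + 1 + 1 = 2 * (m + 1) by ring, mul_nsmul, two_nsmul,
      hker _ hne, nsmul_zero]

end AddMonoidHom

theorem AddSubgroup.add_self_eq_zero_of_card_eq_two {G : Type*} [AddGroup G] {H : AddSubgroup G}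
    (hH : Nat.card H = 2) {x : G} (hx : x ∈ H) : x + x = 0 := by
  have := congrArg Subtype.val (card_nsmul_eq_zero' (G := H) (x := ⟨x, hx⟩))
  rwa [hH, two_nsmul] at this

/-- Extension-theoretic form of Lemma 2: given a surjection `p : E → P` of
abelian groups with two-element kernel, `P` finitely generated, if the
extension does not split then there is an element `a ∈ P` of order two all of
whose preimages in `E` have order four (i.e. satisfy `e + e ≠ 0`). -/
theorem stmt_0 (P E : Type*) [AddCommGroup P] [AddGroup.FG P] [AddCommGroup E]
    (p : E →+ P) (hp : Function.Surjective p) (hker : Nat.card p.ker = 2)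
    (hnonsplit : ¬ ∃ s : P →+ E, p.comp s = AddMonoidHom.id P) :
    ∃ a : P, a ≠ 0 ∧ a + a = 0 ∧ ∀ e : E, p e = a → e + e ≠ 0 := by
  by_contra! hcon
  apply hnonsplit
  have hlift : ∀ a, a + a = 0 → ∃ e, p e = a ∧ e + e = 0 := by
    intro a ha
    rcases eq_or_ne a 0 with rfl | ha0
    · exact ⟨0, map_zero p, add_zero 0⟩
    · exact hcon a ha0 ha
  have htors := p.hasTorsionLifts_of_two_torsion hp
    (fun x hx => AddSubgroup.add_self_eq_zero_of_card_eq_two hker hx) hlift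
  obtain ⟨d, ι, _, q, -, k, ⟨φ⟩⟩ := AddCommGroup.equiv_free_prod_directSum_zmod P
  classical
  have hP : p.LiftsAlong P :=
    ((p.liftsAlong_int htors).finsupp _ |>.prod <|
      .directSum fun i => p.liftsAlong_zmod htors _).of_addEquiv φ
  exact hP (AddMonoidHom.id P)
end

section
/- Let c, s and r be integers with s ≥ 0 and let S be a set of pairs of integers containing (c, s) which is closed under each of the three operations (x, y) ↦ (x + 2, y), (x, y) ↦ (x + 22, y + 16), and (x, y) ↦ (x + 12, y + 8). Then S contains every pair of integers (x, y) such that y ≥ s, y − s is divisible by 8, x − c is even, and 11·(y − s) ≤ 8·(x − c). -/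
/-- Arithmetic core of the realization arguments in Theorems 2 and 6: a set of
pairs of integers containing `(c, s)` with `s ≥ 0` and closed under the shifts
`(+2, 0)`, `(+22, +16)` and `(+12, +8)` contains every pair `(x, y)` with
`y ≥ s`, `8 ∣ y − s`, `x − c` even and `11·(y − s) ≤ 8·(x − c)`. -/
theorem stmt_5 (c s r : ℤ) (hs : 0 ≤ s) (S : Set (ℤ × ℤ)) (hcs : (c, s) ∈ S)
    (h1 : ∀ x y : ℤ, (x, y) ∈ S → (x + 2, y) ∈ S)
    (h2 : ∀ x y : ℤ, (x, y) ∈ S → (x + 22, y + 16) ∈ S)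
    (h3 : ∀ x y : ℤ, (x, y) ∈ S → (x + 12, y + 8) ∈ S) :
    ∀ x y : ℤ, s ≤ y → 8 ∣ y - s → 2 ∣ x - c → 11 * (y - s) ≤ 8 * (x - c) →
      (x, y) ∈ S := by
  have hA : ∀ a b : ℤ, (a, b) ∈ S → ∀ n : ℕ, (a + 2 * n, b) ∈ S := by
    intro a b hab n
    induction n with
    | zero => simpa using hab
    | succ k ih =>
        have := h1 _ _ ih
        have : (a + 2 * k + 2, b) ∈ S := this
        convert this using 2
        push_cast; ring
  have hB : ∀ a b : ℤ, (a, b) ∈ S → ∀ n : ℕ, (a + 22 * n, b + 16 * n) ∈ S := by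
    intro a b hab n
    induction n with
    | zero => simpa using hab
    | succ k ih =>
        have := h2 _ _ ih
        convert this using 2 <;> (push_cast; ring)
  intro x y hy h8 h2' h11
  obtain ⟨m, hm⟩ := h8
  have hm0 : 0 ≤ m := by nlinarith
  lift m to ℕ using hm0 with k
  rcases Nat.even_or_odd k with ⟨j, hj⟩ | ⟨j, hj⟩
  · -- y - s = 8*(2j) = 16 j
    obtain ⟨t, ht⟩ := h2'
    have hSj := hB c s hcs j
    have hle : 22 * (j : ℤ) ≤ x - c := by
      have : (y - s) = 16 * (j : ℤ) := by rw [hm, hj]; push_cast; ring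
      nlinarith
    have ht0 : 0 ≤ t - 11 * (j : ℤ) := by omega
    set u : ℤ := t - 11 * j with hu
    lift u to ℕ using ht0 with u hu'
    have := hA _ _ hSj u
    have hx : x = c + 22 * (j : ℤ) + 2 * (u : ℤ) := by omega
    have hy' : y = s + 16 * (j : ℤ) := by
      have : (y - s) = 16 * (j : ℤ) := by rw [hm, hj]; push_cast; ring
      omega
    rw [hx, hy']
    exact this
  · -- y - s = 8*(2j+1) = 16 j + 8
    obtain ⟨t, ht⟩ := h2'
    have hys : (y - s) = 16 * (j : ℤ) + 8 := by rw [hm, hj]; push_cast; ring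
    have hle : 22 * (j : ℤ) + 11 ≤ x - c := by nlinarith
    have hle2 : 22 * (j : ℤ) + 12 ≤ x - c := by omega
    have hSj := hB c s hcs j
    have hS12 := h3 _ _ hSj
    have ht0 : 0 ≤ t - 11 * (j : ℤ) - 6 := by omega
    set u : ℤ := t - 11 * j - 6 with hu
    lift u to ℕ using ht0 with u hu'
    have := hA _ _ hS12 u
    have hx : x = c + 22 * (j : ℤ) + 12 + 2 * (u : ℤ) := by omega
    have hy' : y = s + 16 * (j : ℤ) + 8 := by omega
    rw [hx, hy']
    exact this
end

section
/- Let q be an integer and let S be a set of pairs of integers containing (q, 0) which is closed under each of the three operations (x, y) ↦ (x + 2, y), (x, y) ↦ (x + 22, y + 16), and (x, y) ↦ (x + 12, y + 8). Then S contains every pair of integers (x, y) such that y ≥ 0, y is divisible by 8, x − q is even, and 11·y ≤ 8·(x − q). -/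
/-- Combinatorial content of the proof of Theorem 6: a set of pairs of
integers containing `(q, 0)` and closed under the shifts `(+2, 0)`,
`(+22, +16)` and `(+12, +8)` contains every pair `(x, y)` with `y ≥ 0`,
`8 ∣ y`, `x − q` even and `11·y ≤ 8·(x − q)`. -/
theorem stmt_6 (q : ℤ) (S : Set (ℤ × ℤ)) (hq : (q, 0) ∈ S)
    (h1 : ∀ x y : ℤ, (x, y) ∈ S → (x + 2, y) ∈ S)
    (h2 : ∀ x y : ℤ, (x, y) ∈ S → (x + 22, y + 16) ∈ S)
    (h3 : ∀ x y : ℤ, (x, y) ∈ S → (x + 12, y + 8) ∈ S) :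
    ∀ x y : ℤ, 0 ≤ y → 8 ∣ y → 2 ∣ x - q → 11 * y ≤ 8 * (x - q) →
      (x, y) ∈ S := by
  have aux : ∀ a b n : ℕ, (q + 12 * (a:ℤ) + 22 * (b:ℤ) + 2 * (n:ℤ), 8 * (a:ℤ) + 16 * (b:ℤ)) ∈ S := by
    intro a
    induction a with
    | zero =>
      intro b
      induction b with
      | zero =>
        intro n
        induction n with
        | zero => simpa using hq
        | succ m ih =>
          have := h1 _ _ ih
          convert this using 2 <;> push_cast <;> ring
      | succ c ihc =>
        intro n
        have := h2 _ _ (ihc n)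
        convert this using 2 <;> push_cast <;> ring
    | succ a iha =>
      intro b n
      have := h3 _ _ (iha b n)
      convert this using 2 <;> push_cast <;> ring
  intro x y hy h8 h2x h11
  obtain ⟨k, rfl⟩ := h8
  have hk : 0 ≤ k := by linarith
  obtain ⟨m, rfl⟩ : ∃ m : ℕ, k = (m : ℤ) := ⟨k.toNat, (Int.toNat_of_nonneg hk).symm⟩
  -- a = m % 2, b = m / 2
  set a := m % 2 with ha
  set b := m / 2 with hb
  have hab : m = a + 2 * b := by omega
  -- x - q ≥ 11*m + a
  have hxa : 11 * (m : ℤ) + (a : ℤ) ≤ x - q := by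
    have h11' : 11 * (m : ℤ) ≤ x - q := by linarith
    have hcase : a = 0 ∨ a = 1 := by omega
    rcases hcase with h | h
    · simp [h]; linarith
    · obtain ⟨t, ht⟩ := h2x
      have hmo : m % 2 = 1 := by omega
      have : (m:ℤ) % 2 = 1 := by exact_mod_cast hmo
      simp [h]; omega
  obtain ⟨n, hn⟩ : ∃ n : ℕ, x - q = 12 * (a : ℤ) + 22 * b + 2 * n := by
    have he : (2:ℤ) ∣ x - q - (12 * a + 22 * b) := by
      obtain ⟨t, ht⟩ := h2x
      exact ⟨t - 6 * a - 11 * b, by push_cast; linarith⟩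
    obtain ⟨t, ht⟩ := he
    have ht0 : 0 ≤ t := by
      have : (12 : ℤ) * a + 22 * b = 11 * m + a := by push_cast [hab]; ring
      omega
    exact ⟨t.toNat, by rw [Int.toNat_of_nonneg ht0]; linarith⟩
  have := aux a b n
  have hx : x = q + 12 * (a:ℤ) + 22 * b + 2 * n := by linarith
  have hy' : 8 * (m : ℤ) = 8 * (a:ℤ) + 16 * b := by push_cast [hab]; ring
  rw [hx, hy']
  exact this
end
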